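/- Fundamental Theorem of Affine Geometry, ordered case: let F be a linearly ordered field and let d ≥ 2. A bijection g : F^d → F^d respects the betweenness relation Bw (i.e., Bw(p,q,r) ↔ Bw(g(p),g(q),g(r)) for all p,q,r) if and only if g = A ∘ α̃ for some affine transformation A of F^d and some automorphism α of the ordered field F (a field automorphism of F that preserves the order ≤), where α̃ denotes the map acting as α on each coordinate. -/

import Mathlib

open FirstOrder

/-- Function symbols of the language of fields `{+, ·, 0, 1}`. -/
inductive FieldFunc : ℕ → Type
  | add : FieldFunc 2
  | mul : FieldFunc 2
  | zero : FieldFunc 0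
  | one : FieldFunc 0

/-- Relation symbols of the language of ordered fields: the ordering `≤`. -/
inductive OrderRel : ℕ → Type
  | le : OrderRel 2

/-- The first-order language of fields `{+, ·, 0, 1}`. -/
def fieldLang : FirstOrder.Language := ⟨FieldFunc, fun _ => Empty⟩

/-- The first-order language of ordered fields `{+, ·, 0, 1, ≤}`. -/
def orderedFieldLang : FirstOrder.Language := ⟨FieldFunc, OrderRel⟩

/-- The interpretation of the field function symbols in a field `F`. -/
def fieldFuncMap {F : Type} [Field F] : ∀ {n}, FieldFunc n → (Fin n → F) → F
  | _, .add, x => x 0 + x 1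
  | _, .mul, x => x 0 * x 1
  | _, .zero, _ => 0
  | _, .one, _ => 1

/-- A field `F` as a structure for the language of fields. -/
def fieldStr (F : Type) [Field F] : fieldLang.Structure F where
  funMap := fieldFuncMap
  RelMap := fun r => r.elim

/-- A linearly ordered field `F` as a structure for the language of ordered fields. -/
def orderedFieldStr (F : Type) [Field F] [LinearOrder F] [IsStrictOrderedRing F] : orderedFieldLang.Structure F where
  funMap := fieldFuncMap
  RelMap := fun r x => match r with | .le => x 0 ≤ x 1

/-- An `n`-ary relation `R` on `F^d` is definable over the field `F` iff its flattening
(a `d·n`-ary relation on `F`, here indexed by `Fin n × Fin d`) is definable without parameters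
by a first-order formula in the language of fields interpreted in `F`. -/
def DefinableOverField (F : Type) [Field F] (d : ℕ) {n : ℕ}
    (R : (Fin n → Fin d → F) → Prop) : Prop :=
  letI := fieldStr F
  ∃ φ : fieldLang.Formula (Fin n × Fin d),
    ∀ p : Fin n → Fin d → F, R p ↔ φ.Realize fun q => p q.1 q.2

/-- An `n`-ary relation `R` on `F^d` is definable over the ordered field `F` iff its flattening
is definable without parameters by a first-order formula in the language of ordered fields
interpreted in `F`. -/
def DefinableOverOrderedField (F : Type) [Field F] [LinearOrder F] [IsStrictOrderedRing F] (d : ℕ) {n : ℕ}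
    (R : (Fin n → Fin d → F) → Prop) : Prop :=
  letI := orderedFieldStr F
  ∃ φ : orderedFieldLang.Formula (Fin n × Fin d),
    ∀ p : Fin n → Fin d → F, R p ↔ φ.Realize fun q => p q.1 q.2

/-- A first-order structure in a purely relational language with universe `P`,
given by an indexed family of relations with their arities. -/
structure RelStruct (P : Type) where
  ι : Type
  arity : ι → ℕ
  rel : ∀ i, (Fin (arity i) → P) → Prop

namespace RelStruct

variable {P : Type}

/-- The purely relational first-order language of `G`. -/
def lang (G : RelStruct P) : FirstOrder.Language :=
  ⟨fun _ => Empty, fun n => { i : G.ι // G.arity i = n }⟩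

/-- `P` as a first-order structure for the language of `G`. -/
def str (G : RelStruct P) : G.lang.Structure P where
  funMap := fun f => f.elim
  RelMap := fun r x => G.rel r.1 fun j => x (Fin.cast r.2 j)

/-- A relation is a *concept* of `G` iff it is definable in `G` without parameters. -/
def Concept (G : RelStruct P) {n : ℕ} (R : (Fin n → P) → Prop) : Prop :=
  letI := G.str
  ∃ φ : G.lang.Formula (Fin n), ∀ a : Fin n → P, R a ↔ φ.Realize a

/-- An automorphism of `G` is a bijection of its universe respecting all its relations. -/
def IsAut (G : RelStruct P) (g : P → P) : Prop :=
  Function.Bijective g ∧ ∀ i (a : Fin (G.arity i) → P), G.rel i a ↔ G.rel i (g ∘ a)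

/-- The set of all concepts (of all arities `n ≥ 1`) of `G`. -/
def conceptSet (G : RelStruct P) : Set (Σ n : ℕ, (Fin n → P) → Prop) :=
  { R | 1 ≤ R.1 ∧ G.Concept R.2 }

/-- The set of automorphisms of `G`. -/
def autSet (G : RelStruct P) : Set (P → P) := { g | G.IsAut g }

end RelStruct

/-- An affine transformation of `F^d`: a composition of a linear bijection with a translation. -/
def IsAffineTrf (F : Type) [Field F] (d : ℕ) (A : (Fin d → F) → (Fin d → F)) : Prop :=
  ∃ (L : (Fin d → F) ≃ₗ[F] (Fin d → F)) (t : Fin d → F), ∀ p, A p = L p + t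

/-- The set of affine automorphisms of `G`: affine transformations that are automorphisms. -/
def affAutSet (F : Type) [Field F] (d : ℕ) (G : RelStruct (Fin d → F)) :
    Set ((Fin d → F) → (Fin d → F)) :=
  { g | IsAffineTrf F d g ∧ G.IsAut g }

/-- The collinearity relation on `F^d`. -/
def Col {F : Type} [Field F] {d : ℕ} (p q r : Fin d → F) : Prop :=
  r = p ∨ ∃ l : F, q = p + l • (r - p)

/-- Collinearity as a ternary relation in the sense of `RelStruct` concepts. -/
def colRel (F : Type) [Field F] (d : ℕ) : (Fin 3 → Fin d → F) → Prop :=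
  fun a => Col (a 0) (a 1) (a 2)

/-- The betweenness relation on `F^d` over a linearly ordered field. -/
def Bw {F : Type} [Field F] [LinearOrder F] [IsStrictOrderedRing F] {d : ℕ} (p q r : Fin d → F) : Prop :=
  ∃ l : F, 0 ≤ l ∧ l ≤ 1 ∧ q = p + l • (r - p)

/-- Betweenness as a ternary relation in the sense of `RelStruct` concepts. -/
def bwRel (F : Type) [Field F] [LinearOrder F] [IsStrictOrderedRing F] (d : ℕ) : (Fin 3 → Fin d → F) → Prop :=
  fun a => Bw (a 0) (a 1) (a 2)

/-- `R` is closed under a map `g` iff `R(a₁,…,aₙ)` implies `R(g(a₁),…,g(aₙ))`. -/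
def ClosedUnder {P : Type} {n : ℕ} (R : (Fin n → P) → Prop) (g : P → P) : Prop :=
  ∀ a, R a → R (g ∘ a)

/-- The map on `F^d` induced componentwise by a field automorphism `α` of `F`. -/
def indMap {F : Type} [Field F] (α : F ≃+* F) {d : ℕ} : (Fin d → F) → (Fin d → F) :=
  fun p j => α (p j)

/-!
Three points are collinear iff one of them lies between the other two, so a bijection `g`
preserving betweenness is a collineation, and so is `f = g - g 0`, which fixes `0`. Lines through
`0` go to lines through `0`, hence `f (t • x) = σₓ(t) • f x`. For independent `x, y` the point
`f (x + y)` lies in the plane of `f x, f y` (as `x + y` is the midpoint of `2x` and `2y`), and its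
coefficients are `1`: otherwise the line through `f x` and `f (x + y)` would meet `F • f y`, while
their preimages `x + F • y` and `F • y` are parallel. So `f` is additive on independent pairs,
comparing `f (t • (x + y))` in two ways shows that `σₓ` does not depend on `x` (here `d ≥ 2` is
needed), and `σ` is then a field automorphism making `f` semilinear. Finally `0 ≤ t` iff `t • w`
lies between `0` and `(t + 1) • w`, so `σ` preserves the order.
-/

open Function

section Collinearity

variable {F : Type} [Field F] {d : ℕ}

theorem col_iff_collinear {p q r : Fin d → F} : Col p q r ↔ Collinear F {p, q, r} := by
  have hline : (∃ l : F, q = p + l • (r - p)) ↔ q ∈ line[F, p, r] := by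
    simp only [mem_affineSpan_pair_iff_exists_lineMap_eq, AffineMap.lineMap_apply_module',
      eq_comm (a := q), add_comm p]
  rw [Col, hline]
  constructor
  · rintro (hrp | h)
    · simpa [hrp, Set.pair_comm] using collinear_pair F p q
    · rw [Set.insert_comm]
      exact collinear_insert_of_mem_affineSpan_pair h
  · intro h
    by_cases hrp : r = p
    · exact Or.inl hrp
    · exact Or.inr (h.mem_affineSpan_of_mem_of_ne (by simp) (by simp) (by simp) (Ne.symm hrp))

theorem col_zero_iff_not_linearIndependent {x y : Fin d → F} :
    Col 0 x y ↔ ¬LinearIndependent F ![x, y] := by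
  rcases eq_or_ne y 0 with rfl | hy
  · simp only [Col, true_or, true_iff]
    exact fun h => by simpa using h.ne_zero 1
  · rw [LinearIndependent.pair_symm_iff, LinearIndependent.pair_iff' hy]
    simp [Col, hy, eq_comm]

theorem exists_ne_zero_of_pos (hd : 0 < d) : ∃ x : Fin d → F, x ≠ 0 :=
  ⟨fun _ => 1, Function.ne_iff.2 ⟨⟨0, hd⟩, one_ne_zero⟩⟩

theorem exists_linearIndependent_pair_of_two_le (hd : 2 ≤ d) {x : Fin d → F} (hx : x ≠ 0) :
    ∃ y, LinearIndependent F ![x, y] :=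
  exists_linearIndependent_pair_of_one_lt_finrank (by rw [Module.finrank_fin_fun]; omega) hx

end Collinearity

section Collineation

variable {F : Type} [Field F] {d : ℕ}

structure IsCollineation (f : (Fin d → F) → (Fin d → F)) : Prop where
  bijective : Bijective f
  col_iff : ∀ p q r, Col p q r ↔ Col (f p) (f q) (f r)

namespace IsCollineation

variable {f : (Fin d → F) → (Fin d → F)}

theorem map_ne_zero (hf : IsCollineation f) (hf0 : f 0 = 0) {x : Fin d → F} (hx : x ≠ 0) :
    f x ≠ 0 :=
  fun h => hx (hf.bijective.1 (h.trans hf0.symm))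

theorem linearIndependent_map_iff (hf : IsCollineation f) (hf0 : f 0 = 0) {x y : Fin d → F} :
    LinearIndependent F ![f x, f y] ↔ LinearIndependent F ![x, y] := by
  rw [← not_iff_not, ← col_zero_iff_not_linearIndependent, ← col_zero_iff_not_linearIndependent,
    hf.col_iff 0 x y, hf0]

theorem exists_map_smul_eq_smul (hf : IsCollineation f) (hf0 : f 0 = 0) {x : Fin d → F}
    (hx : x ≠ 0) (t : F) : ∃ c : F, f (t • x) = c • f x := by
  have h := (hf.col_iff 0 (t • x) x).1 (Or.inr ⟨t, by simp⟩)
  simpa [Col, hf0, hf.map_ne_zero hf0 hx] using h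

theorem exists_map_add_eq_smul_add_smul [NeZero (2 : F)] (hf : IsCollineation f) (hf0 : f 0 = 0)
    {x y : Fin d → F} (h : LinearIndependent F ![x, y]) :
    ∃ a b : F, f (x + y) = a • f x + b • f y := by
  have hne : (2 : F) • x ≠ (2 : F) • y :=
    (smul_right_injective _ two_ne_zero).ne (h.injective.ne (by decide : (0 : Fin 2) ≠ 1))
  have hmid : Col ((2 : F) • x) (x + y) ((2 : F) • y) := by
    refine Or.inr ⟨2⁻¹, ?_⟩
    rw [← smul_sub, smul_smul, inv_mul_cancel₀ two_ne_zero, one_smul]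
    module
  obtain ⟨a, ha⟩ := hf.exists_map_smul_eq_smul hf0 (x := x) (h.ne_zero 0) 2
  obtain ⟨b, hb⟩ := hf.exists_map_smul_eq_smul hf0 (x := y) (h.ne_zero 1) 2
  rcases (hf.col_iff _ _ _).1 hmid with heq | ⟨l, hl⟩
  · exact absurd (hf.bijective.1 heq).symm hne
  · exact ⟨(1 - l) * a, l * b, by rw [hl, ha, hb]; module⟩

theorem coeff_eq_one_of_map_add_eq (hf : IsCollineation f) (hf0 : f 0 = 0) {x y : Fin d → F}
    (h : LinearIndependent F ![x, y]) {a b : F} (hab : f (x + y) = a • f x + b • f y) : a = 1 := by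
  by_contra ha
  have ha' : 1 - a ≠ 0 := sub_ne_zero.2 (Ne.symm ha)
  -- `f u` is the point where the line through `f x` and `f (x + y)` meets `F • f y`
  obtain ⟨u, hu⟩ := hf.bijective.2 (((1 - a)⁻¹ * b) • f y)
  have hux : Col x u (x + y) := by
    refine (hf.col_iff _ _ _).2 (Or.inr ⟨(1 - a)⁻¹, ?_⟩)
    rw [hu, hab]
    match_scalars
    · field_simp
    · field_simp
      ring
  have huy : Col 0 u y := (hf.col_iff _ _ _).2 (Or.inr ⟨(1 - a)⁻¹ * b, by simp [hf0, hu]⟩)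
  have hy : y ≠ 0 := h.ne_zero 1
  simp only [Col, add_eq_left, hy, false_or, add_sub_cancel_left, zero_add, sub_zero] at hux huy
  obtain ⟨m, rfl⟩ := hux
  obtain ⟨l, hl⟩ := huy
  have := LinearIndependent.pair_iff.1 h 1 (m - l) (by rw [sub_smul, ← hl]; module)
  exact one_ne_zero this.1

theorem map_add_of_linearIndependent [NeZero (2 : F)] (hf : IsCollineation f) (hf0 : f 0 = 0)
    {x y : Fin d → F} (h : LinearIndependent F ![x, y]) : f (x + y) = f x + f y := by
  obtain ⟨a, b, hab⟩ := hf.exists_map_add_eq_smul_add_smul hf0 h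
  have ha := hf.coeff_eq_one_of_map_add_eq hf0 h hab
  have hb := hf.coeff_eq_one_of_map_add_eq hf0 (LinearIndependent.pair_symm_iff.1 h)
    (by rw [add_comm, hab, add_comm])
  rw [hab, ha, hb, one_smul, one_smul]

theorem eq_of_map_smul_of_linearIndependent [NeZero (2 : F)] (hf : IsCollineation f)
    (hf0 : f 0 = 0) {x y : Fin d → F} (h : LinearIndependent F ![x, y]) {t a b : F}
    (ha : f (t • x) = a • f x) (hb : f (t • y) = b • f y) : a = b := by
  have hxy : x + y ≠ 0 := by simpa using (LinearIndependent.pair_add_right_iff.2 h).ne_zero 1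
  obtain ⟨c, hc⟩ := hf.exists_map_smul_eq_smul hf0 hxy t
  have hsplit : f (t • x + t • y) = f (t • x) + f (t • y) := by
    rcases eq_or_ne t 0 with rfl | ht
    · simp [hf0]
    · exact hf.map_add_of_linearIndependent hf0 ((LinearIndependent.pair_smul_iff ht).2 h)
  rw [← smul_add, hc, ha, hb, hf.map_add_of_linearIndependent hf0 h] at hsplit
  have := LinearIndependent.pair_iff.1 ((hf.linearIndependent_map_iff hf0).2 h) (c - a) (c - b)
    (by rw [sub_smul, sub_smul, sub_add_sub_comm, ← smul_add, hsplit, sub_self])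
  exact (sub_eq_zero.1 this.1).symm.trans (sub_eq_zero.1 this.2)

theorem exists_forall_map_smul_eq_smul [NeZero (2 : F)] (hf : IsCollineation f) (hf0 : f 0 = 0)
    (hd : 2 ≤ d) : ∃ σ : F → F, ∀ (t : F) (x : Fin d → F), f (t • x) = σ t • f x := by
  obtain ⟨e, he⟩ := exists_ne_zero_of_pos (F := F) (by omega : 0 < d)
  choose σ hσ using hf.exists_map_smul_eq_smul hf0 he
  refine ⟨σ, fun t x => ?_⟩
  rcases eq_or_ne x 0 with rfl | hx
  · simp [hf0]
  obtain ⟨c, hc⟩ := hf.exists_map_smul_eq_smul hf0 hx t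
  suffices c = σ t by rw [hc, this]
  obtain ⟨z, hxz, hez⟩ : ∃ z, LinearIndependent F ![x, z] ∧ LinearIndependent F ![e, z] := by
    by_cases hxe : LinearIndependent F ![x, e]
    · refine ⟨x + e, LinearIndependent.pair_add_right_iff.2 hxe, ?_⟩
      rw [add_comm]
      exact LinearIndependent.pair_add_right_iff.2 (LinearIndependent.pair_symm_iff.1 hxe)
    · obtain ⟨z, hz⟩ := exists_linearIndependent_pair_of_two_le hd hx
      refine ⟨z, hz, ?_⟩
      obtain ⟨k, rfl⟩ : ∃ k : F, k • x = e := by simpa [LinearIndependent.pair_iff' hx] using hxe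
      rw [LinearIndependent.pair_iff' hx] at hz
      rw [LinearIndependent.pair_iff' he]
      intro a
      rw [smul_smul]
      exact hz _
  obtain ⟨b, hb⟩ := hf.exists_map_smul_eq_smul hf0 (hez.ne_zero 1) t
  exact (hf.eq_of_map_smul_of_linearIndependent hf0 hxz hc hb).trans
    (hf.eq_of_map_smul_of_linearIndependent hf0 hez (hσ t) hb).symm

theorem add_of_forall_map_smul_eq_smul [NeZero (2 : F)] (hf : IsCollineation f) (hf0 : f 0 = 0)
    {σ : F → F} (hσ : ∀ (t : F) (x : Fin d → F), f (t • x) = σ t • f x) {x y : Fin d → F}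
    (h : LinearIndependent F ![x, y]) (s t : F) : σ (s + t) = σ s + σ t := by
  have hfx := hf.map_ne_zero hf0 (x := x) (h.ne_zero 0)
  have hσ0 : σ 0 = 0 := smul_left_injective F hfx (by simp [← hσ, hf0])
  have hsmul_add : ∀ r : F, f (r • x + y) = σ r • f x + f y := by
    intro r
    rcases eq_or_ne r 0 with rfl | hr
    · simp [hσ0]
    · have hind : LinearIndependent F ![r • x, y] := by
        simpa using LinearIndependent.pair_add_smul_add_smul_iff (x := x) (y := y) r 0 0 1
          |>.2 ⟨h, by simpa⟩
      rw [hf.map_add_of_linearIndependent hf0 hind, hσ]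
  rcases eq_or_ne t 0 with rfl | ht
  · simp [hσ0]
  have hind : LinearIndependent F ![s • x + y, t • x] := by
    simpa using LinearIndependent.pair_add_smul_add_smul_iff (x := x) (y := y) s 1 t 0
      |>.2 ⟨h, by simpa [eq_comm] using ht⟩
  apply smul_left_injective F hfx
  apply add_right_cancel (b := f y)
  calc σ (s + t) • f x + f y = f ((s • x + y) + t • x) := by rw [← hsmul_add]; congr 1; module
    _ = (σ s + σ t) • f x + f y := by
      rw [hf.map_add_of_linearIndependent hf0 hind, hsmul_add, hσ]; module

theorem exists_ringEquiv_map_smul [NeZero (2 : F)] (hf : IsCollineation f) (hf0 : f 0 = 0)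
    (hd : 2 ≤ d) : ∃ α : F ≃+* F, ∀ (t : F) (x : Fin d → F), f (t • x) = α t • f x := by
  obtain ⟨σ, hσ⟩ := hf.exists_forall_map_smul_eq_smul hf0 hd
  obtain ⟨x, hx⟩ := exists_ne_zero_of_pos (F := F) (by omega : 0 < d)
  obtain ⟨y, hxy⟩ := exists_linearIndependent_pair_of_two_le hd hx
  have cancel : ∀ {a b : F}, a • f x = b • f x → a = b :=
    fun h => smul_left_injective F (hf.map_ne_zero hf0 hx) h
  let σhom : F →+* F :=
    { toFun := σ
      map_one' := cancel (by rw [← hσ, one_smul, one_smul])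
      map_mul' := fun s t => cancel (by rw [← hσ, mul_smul, hσ, hσ, smul_smul])
      map_zero' := cancel (by rw [← hσ, zero_smul, zero_smul, hf0])
      map_add' := hf.add_of_forall_map_smul_eq_smul hf0 hσ hxy }
  have hinj : Injective σ := fun s t hst =>
    smul_left_injective F hx (hf.bijective.1 (by rw [hσ, hσ, hst]))
  have hsurj : Surjective σ := by
    intro m
    obtain ⟨u, hu⟩ := hf.bijective.2 (m • f x)
    obtain ⟨l, rfl⟩ : ∃ l : F, l • x = u := by
      have : Col 0 u x := (hf.col_iff 0 u x).2 (Or.inr ⟨m, by simp [hf0, hu]⟩)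
      simpa [Col, hx, eq_comm] using this
    exact ⟨l, cancel (by rw [← hσ, hu])⟩
  exact ⟨RingEquiv.ofBijective σhom ⟨hinj, hsurj⟩, hσ⟩

theorem map_add [NeZero (2 : F)] (hf : IsCollineation f) (hf0 : f 0 = 0) {α : F ≃+* F}
    (hα : ∀ (t : F) (x : Fin d → F), f (t • x) = α t • f x) (u v : Fin d → F) :
    f (u + v) = f u + f v := by
  by_cases h : LinearIndependent F ![u, v]
  · exact hf.map_add_of_linearIndependent hf0 h
  rcases eq_or_ne v 0 with rfl | hv
  · simp [hf0]
  obtain ⟨l, rfl⟩ : ∃ l : F, l • v = u := by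
    simpa [LinearIndependent.pair_symm_iff (x := u), LinearIndependent.pair_iff' hv] using h
  calc f (l • v + v) = f ((l + 1) • v) := by rw [add_smul, one_smul]
    _ = f (l • v) + f v := by rw [hα, hα, _root_.map_add, map_one, add_smul, one_smul]

theorem exists_semilinearMap [NeZero (2 : F)] (hf : IsCollineation f) (hf0 : f 0 = 0)
    (hd : 2 ≤ d) :
    ∃ (α : F ≃+* F) (φ : (Fin d → F) →ₛₗ[(α : F →+* F)] (Fin d → F)), ⇑φ = f := by
  obtain ⟨α, hα⟩ := hf.exists_ringEquiv_map_smul hf0 hd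
  exact ⟨α, { toFun := f, map_add' := hf.map_add hf0 hα, map_smul' := hα }, rfl⟩

end IsCollineation

end Collineation

section SemilinearMaps

variable {F : Type} [Field F] {d : ℕ}

def indSemilinearMap (α : F ≃+* F) : (Fin d → F) →ₛₗ[(α : F →+* F)] (Fin d → F) where
  toFun := indMap α
  map_add' _ _ := funext fun _ => map_add α _ _
  map_smul' _ _ := funext fun _ => map_mul α _ _

theorem indMap_symm_apply_indMap (α : F ≃+* F) (p : Fin d → F) :
    indMap α.symm (indMap α p) = p :=
  funext fun _ => α.symm_apply_apply _

theorem indMap_bijective (α : F ≃+* F) : Bijective (indMap α : (Fin d → F) → (Fin d → F)) :=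
  bijective_iff_has_inverse.2 ⟨indMap α.symm, indMap_symm_apply_indMap α,
    fun p => by simpa using indMap_symm_apply_indMap α.symm p⟩

theorem exists_linearEquiv_comp_indMap {α : F ≃+* F}
    (φ : (Fin d → F) →ₛₗ[(α : F →+* F)] (Fin d → F)) (hφ : Bijective φ) :
    ∃ L : (Fin d → F) ≃ₗ[F] (Fin d → F), ∀ p, φ p = L (indMap α p) := by
  have := RingHomInvPair.of_ringEquiv_symm α
  let L : (Fin d → F) →ₗ[F] (Fin d → F) := φ.comp (indSemilinearMap α.symm)
  refine ⟨LinearEquiv.ofBijective L (hφ.comp (indMap_bijective α.symm)), fun p => ?_⟩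
  simp [L, indSemilinearMap, indMap_symm_apply_indMap]

end SemilinearMaps

section Betweenness

variable {F : Type} [Field F] [LinearOrder F] [IsStrictOrderedRing F] {d : ℕ}

theorem bw_iff_wbtw {p q r : Fin d → F} : Bw p q r ↔ Wbtw F p q r := by
  simp only [Bw, Wbtw, affineSegment, Set.mem_image, Set.mem_Icc, AffineMap.lineMap_apply_module',
    eq_comm (a := q), add_comm p, and_assoc]

theorem bw_add_right_iff (c p q r : Fin d → F) : Bw (p + c) (q + c) (r + c) ↔ Bw p q r := by
  simp only [Bw, add_sub_add_right_eq_sub, add_right_comm p c, add_left_inj]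

theorem col_iff_bw_or_bw_or_bw {p q r : Fin d → F} :
    Col p q r ↔ Bw p q r ∨ Bw q r p ∨ Bw r p q := by
  simp only [col_iff_collinear, bw_iff_wbtw]
  refine ⟨Collinear.wbtw_or_wbtw_or_wbtw, ?_⟩
  rintro (h | h | h) <;> convert h.collinear using 1 <;> ext <;> simp <;> tauto

theorem wbtw_zero_self_add_one_iff {t : F} : Wbtw F 0 t (t + 1) ↔ 0 ≤ t := by
  rcases le_or_gt 0 (t + 1) with h | h
  · rw [wbtw_iff_of_le h]
    exact ⟨fun h' => h'.1, fun h' => ⟨h', by linarith⟩⟩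
  · rw [wbtw_comm, wbtw_iff_of_le h.le]
    exact iff_of_false (fun h' => by linarith [h'.1]) (fun h' => by linarith)

theorem bw_zero_smul_add_one_smul_iff {w : Fin d → F} (hw : w ≠ 0) {t : F} :
    Bw 0 (t • w) ((t + 1) • w) ↔ 0 ≤ t := by
  let φ := (LinearMap.toSpanSingleton F (Fin d → F) w).toAffineMap
  have hφ : Injective φ := smul_left_injective F hw
  have := hφ.wbtw_map_iff (x := 0) (y := t) (z := t + 1)
  simp only [φ, LinearMap.coe_toAffineMap, LinearMap.toSpanSingleton_apply, zero_smul] at this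
  rw [bw_iff_wbtw, this, wbtw_zero_self_add_one_iff]

def PreservesBw (f : (Fin d → F) → (Fin d → F)) : Prop :=
  ∀ p q r, Bw p q r ↔ Bw (f p) (f q) (f r)

theorem preservesBw_add_const_iff {f : (Fin d → F) → (Fin d → F)} (c : Fin d → F) :
    PreservesBw (fun p => f p + c) ↔ PreservesBw f := by
  simp only [PreservesBw, bw_add_right_iff]

theorem PreservesBw.isCollineation {f : (Fin d → F) → (Fin d → F)} (hf : Bijective f)
    (hB : PreservesBw f) : IsCollineation f :=
  ⟨hf, fun p q r => by
    rw [col_iff_bw_or_bw_or_bw, col_iff_bw_or_bw_or_bw, hB p q r, hB q r p, hB r p q]⟩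

theorem preservesBw_semilinearMap {α : F ≃+* F} (hα : ∀ x y, x ≤ y ↔ α x ≤ α y)
    (φ : (Fin d → F) →ₛₗ[(α : F →+* F)] (Fin d → F)) (hφ : Injective φ) : PreservesBw φ := by
  intro p q r
  have key : ∀ l : F, φ (p + l • (r - p)) = φ p + α l • (φ r - φ p) := by
    simp [map_sub]
  constructor
  · rintro ⟨l, h0, h1, rfl⟩
    exact ⟨α l, by rwa [← map_zero α, ← hα], by rwa [← map_one α, ← hα], key l⟩
  · rintro ⟨l, h0, h1, hq⟩
    obtain ⟨m, rfl⟩ := α.surjective l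
    exact ⟨m, by rwa [hα, map_zero], by rwa [hα, map_one], hφ (by rw [key, hq])⟩

theorem PreservesBw.le_iff_map_le {α : F ≃+* F}
    {φ : (Fin d → F) →ₛₗ[(α : F →+* F)] (Fin d → F)} (hφ : Injective φ) (hB : PreservesBw φ)
    (hd : 0 < d) (x y : F) : x ≤ y ↔ α x ≤ α y := by
  obtain ⟨w, hw⟩ := exists_ne_zero_of_pos (F := F) hd
  have hφw : φ w ≠ 0 := (map_ne_zero_iff φ hφ).2 hw
  have hnonneg : ∀ t : F, 0 ≤ t ↔ 0 ≤ α t := fun t => by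
    rw [← bw_zero_smul_add_one_smul_iff hw, hB, ← bw_zero_smul_add_one_smul_iff hφw, map_zero,
      map_smulₛₗ, map_smulₛₗ]
    simp
  rw [← sub_nonneg, hnonneg, map_sub, sub_nonneg]

end Betweenness

/-- **Fundamental Theorem of Affine Geometry (ordered case).** Over a linearly ordered field `F`
and `d ≥ 2`, a bijection `g` of `F^d` respects betweenness iff `g = A ∘ α̃` for some affine
transformation `A` of `F^d` and some order-preserving field automorphism `α` of `F`. -/
theorem fundamental_theorem_affine_geometry_ordered
    (F : Type) [Field F] [LinearOrder F] [IsStrictOrderedRing F] (d : ℕ) (hd : 2 ≤ d)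
    (g : (Fin d → F) → (Fin d → F)) (hg : Function.Bijective g) :
    (∀ p q r : Fin d → F, Bw p q r ↔ Bw (g p) (g q) (g r)) ↔
      ∃ (A : (Fin d → F) → (Fin d → F)) (α : F ≃+* F),
        IsAffineTrf F d A ∧ (∀ x y : F, x ≤ y ↔ α x ≤ α y) ∧ g = A ∘ indMap α := by
  constructor
  · intro hB
    have hf : Bijective fun p => g p - g 0 := (Equiv.subRight (g 0)).bijective.comp hg
    have hfB : PreservesBw fun p => g p - g 0 := by
      simpa only [sub_eq_add_neg] using (preservesBw_add_const_iff (-g 0)).2 hB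
    obtain ⟨α, φ, hφ⟩ := (hfB.isCollineation hf).exists_semilinearMap (sub_self _) hd
    rw [← hφ] at hf hfB
    obtain ⟨L, hL⟩ := exists_linearEquiv_comp_indMap φ hf
    refine ⟨fun p => L p + g 0, α, ⟨L, g 0, fun _ => rfl⟩, hfB.le_iff_map_le hf.1 (by omega),
      funext fun p => ?_⟩
    simp only [comp_apply, ← hL, hφ, sub_add_cancel]
  · rintro ⟨A, α, ⟨L, t, hA⟩, hα, rfl⟩
    have hφ : A ∘ indMap α = fun p => (L.toLinearMap.comp (indSemilinearMap α)) p + t :=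
      funext fun p => hA _
    rw [hφ]
    exact (preservesBw_add_const_iff t).2
      (preservesBw_semilinearMap hα _ (L.injective.comp (indMap_bijective α).1))
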